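/- Suppose the constants satisfy the hierarchy 1/n ≪ ε ≪ ε₁ ≪ η₁ ≪ τ ≪ 1. Let G be a digraph on n vertices with δ⁰(G) ≥ n/2 and suppose A, B, S, T is a partition of V(G) satisfying (R0)–(R9). Let L₁ and L₂ be oriented paths of length 8. Then G contains disjoint copies L₁^G of L₁ and L₂^G of L₂ such that each L_i^G is a useful path. Furthermore, for each i one may prescribe in advance whether L_i^G is an AB-path or a BA-path. -/

import Mathlib

open Finset

open scoped Classical

noncomputable section

variable {n : ℕ}

/-- Number of outneighbours of `x` lying in `X`, in the digraph with edge set `G`. -/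
def dPlus (G : Finset (Fin n × Fin n)) (X : Finset (Fin n)) (x : Fin n) : ℕ :=
  (G.filter fun e => e.1 = x ∧ e.2 ∈ X).card

/-- Number of inneighbours of `x` lying in `X`. -/
def dMinus (G : Finset (Fin n × Fin n)) (X : Finset (Fin n)) (x : Fin n) : ℕ :=
  (G.filter fun e => e.2 = x ∧ e.1 ∈ X).card

/-- The minimum semidegree of `G` is at least `r`. -/
def MinSemi (G : Finset (Fin n × Fin n)) (r : ℝ) : Prop :=
  ∀ x : Fin n, r ≤ (dPlus G Finset.univ x : ℝ) ∧ r ≤ (dMinus G Finset.univ x : ℝ)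

/-- `A, B, S, T` is a partition of the vertex set. -/
def Partition4 (A B S T : Finset (Fin n)) : Prop :=
  A ∪ B ∪ S ∪ T = Finset.univ ∧ Disjoint A B ∧ Disjoint A S ∧ Disjoint A T ∧
    Disjoint B S ∧ Disjoint B T ∧ Disjoint S T

/-- An embedding into `G` of the oriented path with `ℓ` edges whose `i`-th edge is
forward iff `p i` (only `i < ℓ` is relevant). -/
def PathEmbed (G : Finset (Fin n × Fin n)) (p : ℕ → Bool) (ℓ : ℕ) (f : ℕ → Fin n) : Prop :=
  Set.InjOn f (Set.Iic ℓ) ∧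
    ∀ i < ℓ, if p i then (f i, f (i + 1)) ∈ G else (f (i + 1), f i) ∈ G

/-- The orientation of the subpath of the cycle `c` starting at vertex `j`. -/
def cycArc (c : ZMod n → Bool) (j : ZMod n) : ℕ → Bool := fun i => c (j + (i : ZMod n))

/-- The list of vertices `f 0, f 1, …, f ℓ` of an embedded path. -/
def vList (f : ℕ → Fin n) (ℓ : ℕ) : List (Fin n) := (List.range (ℓ + 1)).map f

/-- The number of repeated `A`s of a path in `G` (with vertex list `l`): consecutive
pairs of vertices of `A ∪ B` along the path which both lie in `A`. -/
def repA (A B : Finset (Fin n)) (l : List (Fin n)) : ℕ :=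
  let ab := l.filter fun v => decide (v ∈ A ∪ B)
  (ab.zip ab.tail).countP fun q => decide (q.1 ∈ A ∧ q.2 ∈ A)

/-- The number of repeated `B`s of a path with vertex list `l`. -/
def repB (A B : Finset (Fin n)) (l : List (Fin n)) : ℕ :=
  let ab := l.filter fun v => decide (v ∈ A ∪ B)
  (ab.zip ab.tail).countP fun q => decide (q.1 ∈ B ∧ q.2 ∈ B)

/-- Property (R0): `a ≤ b` and `s ≤ t`. -/
def R0 (A B S T : Finset (Fin n)) : Prop := A.card ≤ B.card ∧ S.card ≤ T.card

/-- Properties (R1)–(R9) of an `ABST`-extremal partition. -/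
def Rconds (G : Finset (Fin n × Fin n)) (A B S T : Finset (Fin n))
    (ε ε₁ η₁ τ : ℝ) : Prop :=
  -- (R1)
  (τ * n ≤ (A.card : ℝ) ∧ τ * n ≤ (B.card : ℝ) ∧ τ * n ≤ (S.card : ℝ) ∧
    τ * n ≤ (T.card : ℝ)) ∧
  -- (R2)
  (|(A.card : ℝ) - (B.card : ℝ)| ≤ ε₁ * n ∧ |(S.card : ℝ) - (T.card : ℝ)| ≤ ε₁ * n) ∧
  -- (R3)
  ((∀ x ∈ A, η₁ * n ≤ (dPlus G B x : ℝ) ∧ η₁ * n ≤ (dMinus G B x : ℝ)) ∧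
    (∀ x ∈ B, η₁ * n ≤ (dPlus G A x : ℝ) ∧ η₁ * n ≤ (dMinus G A x : ℝ))) ∧
  -- (R4)
  (∀ x ∈ S, η₁ * n ≤ (dPlus G (B ∪ S) x : ℝ) ∧ η₁ * n ≤ (dMinus G (A ∪ S) x : ℝ)) ∧
  -- (R5)
  (∀ x ∈ T, η₁ * n ≤ (dPlus G (A ∪ T) x : ℝ) ∧ η₁ * n ≤ (dMinus G (B ∪ T) x : ℝ)) ∧
  -- (R6)
  (((A.filter fun x => ¬((B.card : ℝ) - ε ^ ((1 : ℝ) / 3) * n ≤ (dPlus G B x : ℝ) ∧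
      (B.card : ℝ) - ε ^ ((1 : ℝ) / 3) * n ≤ (dMinus G B x : ℝ))).card : ℝ) ≤ ε₁ * n) ∧
  -- (R7)
  (((B.filter fun x => ¬((A.card : ℝ) - ε ^ ((1 : ℝ) / 3) * n ≤ (dPlus G A x : ℝ) ∧
      (A.card : ℝ) - ε ^ ((1 : ℝ) / 3) * n ≤ (dMinus G A x : ℝ))).card : ℝ) ≤ ε₁ * n) ∧
  -- (R8)
  (((S.filter fun x =>
      ¬((B.card : ℝ) + (S.card : ℝ) - ε ^ ((1 : ℝ) / 3) * n ≤ (dPlus G (B ∪ S) x : ℝ) ∧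
        (A.card : ℝ) + (S.card : ℝ) - ε ^ ((1 : ℝ) / 3) * n ≤
          (dMinus G (A ∪ S) x : ℝ))).card : ℝ) ≤ ε₁ * n) ∧
  -- (R9)
  (((T.filter fun x =>
      ¬((A.card : ℝ) + (T.card : ℝ) - ε ^ ((1 : ℝ) / 3) * n ≤ (dPlus G (A ∪ T) x : ℝ) ∧
        (B.card : ℝ) + (T.card : ℝ) - ε ^ ((1 : ℝ) / 3) * n ≤
          (dMinus G (B ∪ T) x : ℝ))).card : ℝ) ≤ ε₁ * n)

/-- A useful `AB`-path: the embedded path of length `m` starts in `A`, ends in `B`, has no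
repeated `A`s or `B`s, and uses an odd number of vertices of `S ∪ T`. -/
def UsefulAB (A B S T : Finset (Fin n)) (m : ℕ) (g : ℕ → Fin n) : Prop :=
  g 0 ∈ A ∧ g m ∈ B ∧ repA A B (vList g m) = 0 ∧ repB A B (vList g m) = 0 ∧
    Odd (((S ∪ T) ∩ (Finset.range (m + 1)).image g).card)

/-- A useful `BA`-path. -/
def UsefulBA (A B S T : Finset (Fin n)) (m : ℕ) (g : ℕ → Fin n) : Prop :=
  g 0 ∈ B ∧ g m ∈ A ∧ repA A B (vList g m) = 0 ∧ repB A B (vList g m) = 0 ∧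
    Odd (((S ∪ T) ∩ (Finset.range (m + 1)).image g).card)

/-!
Call a vertex typical if it satisfies the degree conditions of (R6)–(R9). Typical vertices have at
least `100` typical neighbours of each kind a path construction asks for. A copy of an oriented path
is therefore grown greedily from a short core, one vertex at a time, alternating between typical
vertices of `A` and of `B`; this creates no repeated `A`s or `B`s, and all vertices of `S ∪ T` lie
in the core. If two consecutive edges of the path point the same way, the core is a single typical
vertex of `S` or `T` leading from `A` to `B` or back. An antidirected path needs instead an edge
entering `S` from `B ∪ T`, or entering `T` from `A ∪ S`: as `a + s ≤ n / 2`, minimum semidegree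
`n / 2` gives every vertex of `S` an in-neighbour in `B ∪ T`, and counting in-degrees yields two
disjoint such edges, one for each path. Reversing a path exchanges `AB`- and `BA`-paths, and
exchanging `A` with `B` and `S` with `T` preserves all the conditions.
-/

lemma rpow_one_third_le {ε c : ℝ} (hε : 0 ≤ ε) (hc : 0 ≤ c) (h : ε ≤ c ^ 3) :
    ε ^ ((1 : ℝ) / 3) ≤ c :=
  calc ε ^ ((1 : ℝ) / 3) ≤ (c ^ 3) ^ ((1 : ℝ) / 3) := Real.rpow_le_rpow hε h (by norm_num)
    _ = c := by
      rw [show (1 : ℝ) / 3 = ((3 : ℕ) : ℝ)⁻¹ by norm_num]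
      exact Real.pow_rpow_inv_natCast hc (by norm_num)

lemma List.countP_zip_tail_eq_zero_iff {α : Type*} (p : α × α → Bool) (l : List α) :
    (l.zip l.tail).countP p = 0 ↔ l.IsChain (fun a b => p (a, b) = false) := by
  induction l with
  | nil => simp
  | cons a l ih =>
    cases l with
    | nil => simp
    | cons b l => simp_all [List.isChain_cons_cons]

lemma List.filterMap_ite_eq_map_filter {α β : Type*} (p : α → Bool) (f : α → β) (l : List α) :
    l.filterMap (fun a => if p a then some (f a) else none) = (l.filter p).map f := by
  induction l with
  | nil => rfl
  | cons a l ih => cases h : p a <;> simp [h, ih]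

section Degrees

variable (G : Finset (Fin n × Fin n)) (X : Finset (Fin n)) (x : Fin n)

lemma dPlus_eq_card : dPlus G X x = #{y ∈ X | (x, y) ∈ G} := by
  refine card_nbij' Prod.snd (fun y => (x, y)) ?_ ?_ ?_ ?_ <;> intro e he <;>
    simp only [coe_filter, Set.mem_ofPred_eq] at he ⊢
  · exact ⟨he.2.2, by rw [← he.2.1]; exact he.1⟩
  · exact ⟨he.2, trivial, he.1⟩
  · exact Prod.ext he.2.1.symm rfl

lemma dMinus_eq_card : dMinus G X x = #{y ∈ X | (y, x) ∈ G} := by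
  refine card_nbij' Prod.fst (fun y => (y, x)) ?_ ?_ ?_ ?_ <;> intro e he <;>
    simp only [coe_filter, Set.mem_ofPred_eq] at he ⊢
  · exact ⟨he.2.2, by rw [← he.2.1]; exact he.1⟩
  · exact ⟨he.2, trivial, he.1⟩
  · exact Prod.ext rfl he.2.1.symm

lemma dPlus_le_card : dPlus G X x ≤ #X := by
  rw [dPlus_eq_card]
  exact card_filter_le _ _

lemma dMinus_le_card : dMinus G X x ≤ #X := by
  rw [dMinus_eq_card]
  exact card_filter_le _ _

variable {X} {Y : Finset (Fin n)}

lemma dPlus_union (h : Disjoint X Y) : dPlus G (X ∪ Y) x = dPlus G X x + dPlus G Y x := by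
  simp only [dPlus_eq_card, filter_union, card_union_of_disjoint (disjoint_filter_filter h)]

lemma dMinus_union (h : Disjoint X Y) : dMinus G (X ∪ Y) x = dMinus G X x + dMinus G Y x := by
  simp only [dMinus_eq_card, filter_union, card_union_of_disjoint (disjoint_filter_filter h)]

end Degrees

namespace Partition4

variable {A B S T : Finset (Fin n)}

lemma disjoint_AS_BT (h : Partition4 A B S T) : Disjoint (A ∪ S) (B ∪ T) := by
  obtain ⟨-, hAB, -, hAT, hBS, -, hST⟩ := h
  simp only [disjoint_union_left, disjoint_union_right]
  exact ⟨⟨hAB, hBS.symm⟩, hAT, hST⟩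

lemma union_AS_BT (h : Partition4 A B S T) : (A ∪ S) ∪ (B ∪ T) = univ := by
  rw [← h.1]
  ext x
  simp only [mem_union]
  tauto

lemma card_AS_add_card_BT (h : Partition4 A B S T) : #(A ∪ S) + #(B ∪ T) = n := by
  rw [← card_union_of_disjoint h.disjoint_AS_BT, h.union_AS_BT, card_univ, Fintype.card_fin]

end Partition4

section Semidegree

variable {G : Finset (Fin n × Fin n)}

lemma le_two_mul_card_inNbrs (hloop : ∀ e ∈ G, e.1 ≠ e.2) (hmin : MinSemi G ((n : ℝ) / 2))
    {X Y : Finset (Fin n)} (hXY : Disjoint X Y) (hcover : X ∪ Y = univ) {v : Fin n}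
    (hv : v ∈ X) : n ≤ 2 * (#X - 1 + #{w ∈ Y | (w, v) ∈ G}) := by
  have hdeg : n ≤ 2 * dMinus G univ v := by
    have := (hmin v).2
    exact_mod_cast (by linarith : (n : ℝ) ≤ 2 * dMinus G univ v)
  have hX : #{w ∈ X | (w, v) ∈ G} ≤ #X - 1 := by
    rw [← card_erase_of_mem hv]
    exact card_le_card fun w hw => by
      rw [mem_filter] at hw
      exact mem_erase.2 ⟨hloop _ hw.2, hw.1⟩
  rw [← hcover, dMinus_union G v hXY, dMinus_eq_card, dMinus_eq_card] at hdeg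
  omega

variable {A B S T : Finset (Fin n)}

lemma one_le_card_inNbrs_BT (hloop : ∀ e ∈ G, e.1 ≠ e.2) (hmin : MinSemi G ((n : ℝ) / 2))
    (hpart : Partition4 A B S T) (hR0 : R0 A B S T) {v : Fin n} (hv : v ∈ S) :
    1 ≤ #{w ∈ B ∪ T | (w, v) ∈ G} := by
  have h := le_two_mul_card_inNbrs hloop hmin hpart.disjoint_AS_BT hpart.union_AS_BT
    (mem_union_right A hv)
  have hcard := hpart.card_AS_add_card_BT
  have hle : #(A ∪ S) ≤ #(B ∪ T) := by
    obtain ⟨-, -, hAS, -, -, hBT, -⟩ := hpart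
    rw [card_union_of_disjoint hAS, card_union_of_disjoint hBT]
    exact Nat.add_le_add hR0.1 hR0.2
  have hpos : 0 < #(A ∪ S) := card_pos.2 ⟨v, mem_union_right A hv⟩
  omega

lemma two_le_card_inNbrs_add (hloop : ∀ e ∈ G, e.1 ≠ e.2) (hmin : MinSemi G ((n : ℝ) / 2))
    (hpart : Partition4 A B S T) {v u : Fin n} (hv : v ∈ S) (hu : u ∈ T) :
    2 ≤ #{w ∈ B ∪ T | (w, v) ∈ G} + #{x ∈ A ∪ S | (x, u) ∈ G} := by
  have h₁ := le_two_mul_card_inNbrs hloop hmin hpart.disjoint_AS_BT hpart.union_AS_BT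
    (mem_union_right A hv)
  have h₂ := le_two_mul_card_inNbrs hloop hmin hpart.disjoint_AS_BT.symm
    (union_comm (A ∪ S) _ ▸ hpart.union_AS_BT) (mem_union_right B hu)
  have hcard := hpart.card_AS_add_card_BT
  have hpos₁ : 0 < #(A ∪ S) := card_pos.2 ⟨v, mem_union_right A hv⟩
  have hpos₂ : 0 < #(B ∪ T) := card_pos.2 ⟨u, mem_union_right B hu⟩
  omega

end Semidegree

namespace ABST

def DAdj (G : Finset (Fin n × Fin n)) (d : Bool) (x y : Fin n) : Prop :=
  if d then (x, y) ∈ G else (y, x) ∈ G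

lemma dAdj_not {G : Finset (Fin n × Fin n)} {d : Bool} {x y : Fin n} :
    DAdj G (!d) x y ↔ DAdj G d y x := by
  cases d <;> rfl

def Useful (A B S T : Finset (Fin n)) (b : Bool) (g : ℕ → Fin n) : Prop :=
  (b = true → UsefulAB A B S T 8 g) ∧ (b = false → UsefulBA A B S T 8 g)

def IsUsefulCopy (G : Finset (Fin n × Fin n)) (A B S T P : Finset (Fin n)) (q : ℕ → Bool)
    (b : Bool) (g : ℕ → Fin n) : Prop :=
  PathEmbed G q 8 g ∧ (∀ i ≤ 8, g i ∉ P) ∧ Useful A B S T b g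

section Repetitions

variable {A B S T : Finset (Fin n)}

lemma repA_eq_zero_iff (l : List (Fin n)) :
    repA A B l = 0 ↔ (l.filter (· ∈ A ∪ B)).IsChain (fun x y => ¬ (x ∈ A ∧ y ∈ A)) := by
  rw [repA, List.countP_zip_tail_eq_zero_iff]
  simp only [decide_eq_false_iff_not]

lemma repB_eq_zero_iff (l : List (Fin n)) :
    repB A B l = 0 ↔ (l.filter (· ∈ A ∪ B)).IsChain (fun x y => ¬ (x ∈ B ∧ y ∈ B)) := by
  rw [repB, List.countP_zip_tail_eq_zero_iff]
  simp only [decide_eq_false_iff_not]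

lemma rep_eq_zero_of_isChain (hAB : Disjoint A B) {l : List (Fin n)}
    (h : ((l.filter (· ∈ A ∪ B)).map (fun x => decide (x ∈ A))).IsChain (· ≠ ·)) :
    repA A B l = 0 ∧ repB A B l = 0 := by
  rw [List.isChain_map] at h
  refine ⟨repA_eq_zero_iff l |>.2 (h.imp fun x y hxy => ?_),
    repB_eq_zero_iff l |>.2 (h.imp fun x y hxy => ?_)⟩
  · rintro ⟨hx, hy⟩
    simp [hx, hy] at hxy
  · rintro ⟨hx, hy⟩
    simp [disjoint_right.1 hAB hx, disjoint_right.1 hAB hy] at hxy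

lemma vList_reverse (g : ℕ → Fin n) : vList (fun i => g (8 - i)) 8 = (vList g 8).reverse := by
  simp [vList, List.range_succ]

lemma image_range_reverse (g : ℕ → Fin n) :
    (range 9).image (fun i => g (8 - i)) = (range 9).image g := by
  ext y
  simp only [mem_image, mem_range]
  constructor <;> rintro ⟨i, hi, rfl⟩ <;>
    exact ⟨8 - i, by omega, by simp [Nat.sub_sub_self (by omega : i ≤ 8)]⟩

lemma Useful.reverse {b : Bool} {g : ℕ → Fin n} (h : Useful A B S T b g) :
    Useful A B S T (!b) (fun i => g (8 - i)) := by
  have hrev (l : List (Fin n)) : (repA A B l.reverse = 0 ↔ repA A B l = 0) ∧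
      (repB A B l.reverse = 0 ↔ repB A B l = 0) := by
    simp only [repA_eq_zero_iff, repB_eq_zero_iff, List.filter_reverse, List.isChain_reverse,
      and_comm, and_self]
  simp only [Useful, UsefulAB, UsefulBA, vList_reverse, (hrev _).1, (hrev _).2] at h ⊢
  rw [image_range_reverse]
  cases b <;> simp_all

lemma useful_swap_iff {b : Bool} {g : ℕ → Fin n} :
    Useful B A T S b g ↔ Useful A B S T (!b) g := by
  have hrepA (l : List (Fin n)) : repA B A l = repB A B l := by
    simp only [repA, repB, union_comm]
  have hrepB (l : List (Fin n)) : repB B A l = repA A B l := by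
    simp only [repA, repB, union_comm]
  cases b <;> simp [Useful, UsefulAB, UsefulBA, hrepA, hrepB, union_comm T S, and_comm,
    and_left_comm]

end Repetitions

lemma PathEmbed.reverse {G : Finset (Fin n × Fin n)} {q : ℕ → Bool} {g : ℕ → Fin n}
    (h : PathEmbed G (fun i => !q (7 - i)) 8 g) : PathEmbed G q 8 (fun i => g (8 - i)) := by
  refine ⟨fun i hi j hj hij => ?_, fun i hi => ?_⟩
  · simp only [Set.mem_Iic] at hi hj
    have := h.1 (Set.mem_Iic.2 (by omega)) (Set.mem_Iic.2 (by omega)) hij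
    omega
  · have e : DAdj G (!q (7 - (7 - i))) (g (7 - i)) (g (7 - i + 1)) := h.2 (7 - i) (by omega)
    rw [show 7 - (7 - i) = i by omega, show 7 - i + 1 = 8 - i by omega] at e
    show DAdj G (q i) (g (8 - i)) (g (8 - (i + 1)))
    rw [show 8 - (i + 1) = 7 - i by omega]
    exact dAdj_not.1 e

/-- A `BA`-copy of `q` is the reverse of an `AB`-copy of the reversed orientation. -/
lemma exists_isUsefulCopy_of_forall_AB {G : Finset (Fin n × Fin n)} {A B S T P : Finset (Fin n)}
    (h : ∀ q, ∃ g, IsUsefulCopy G A B S T P q true g) (q : ℕ → Bool) (b : Bool) :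
    ∃ g, IsUsefulCopy G A B S T P q b g := by
  cases b
  · obtain ⟨g, hg, hP, hu⟩ := h fun i => !q (7 - i)
    exact ⟨fun i => g (8 - i), PathEmbed.reverse hg, fun i _ => hP (8 - i) (by omega), hu.reverse⟩
  · exact h q

def part (A B S T : Finset (Fin n)) : Option Bool → Finset (Fin n)
  | some true => A
  | some false => B
  | none => S ∪ T

/-- The labels (`part`s) met along an `AB`-path of length `8` without repeated `A`s or `B`s
and through an odd number of vertices of `S ∪ T`. -/
def IsABLabelling (lab : ℕ → Option Bool) : Prop :=
  lab 0 = some true ∧ lab 8 = some false ∧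
    ((List.range 9).filterMap lab).IsChain (· ≠ ·) ∧ Odd #{i ∈ range 9 | lab i = none}

instance (lab : ℕ → Option Bool) : Decidable (IsABLabelling lab) := by
  unfold IsABLabelling
  infer_instance

lemma useful_of_isABLabelling {A B S T : Finset (Fin n)} (hAB : Disjoint A B)
    (hABST : Disjoint (A ∪ B) (S ∪ T)) {lab : ℕ → Option Bool} (hlab : IsABLabelling lab)
    {g : ℕ → Fin n} (hg : Set.InjOn g (Set.Iic 8))
    (hpart : ∀ i ≤ 8, g i ∈ part A B S T (lab i)) : Useful A B S T true g := by
  obtain ⟨h0, h8, hchain, hodd⟩ := hlab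
  have hlab_eq : ∀ i ≤ 8, lab i = if g i ∈ A ∪ B then some (decide (g i ∈ A)) else none := by
    intro i hi
    have hi := hpart i hi
    rcases hl : lab i with _ | _ | _ <;> rw [hl] at hi <;> simp only [part] at hi
    · simp [disjoint_right.1 hABST hi]
    · simp [hi, disjoint_right.1 hAB hi]
    · simp [hi]
  have hrep : ((vList g 8).filter (· ∈ A ∪ B)).map (fun x => decide (x ∈ A)) =
      (List.range 9).filterMap lab := by
    rw [vList, List.filter_map, List.map_map, ← List.filterMap_ite_eq_map_filter]
    exact List.filterMap_congr fun i hi => by simp [hlab_eq i (by simp at hi; omega)]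
  have himage : (S ∪ T) ∩ (range 9).image g = {i ∈ range 9 | lab i = none}.image g := by
    ext y
    simp only [mem_inter, mem_image, mem_filter, mem_range]
    constructor
    · rintro ⟨hy, i, hi, rfl⟩
      exact ⟨i, ⟨hi, by simp [hlab_eq i (by omega), disjoint_right.1 hABST hy]⟩, rfl⟩
    · rintro ⟨i, ⟨hi, hl⟩, rfl⟩
      exact ⟨by simpa [hl, part] using hpart i (by omega), i, hi, rfl⟩
  have hcard : #((S ∪ T) ∩ (range 9).image g) = #{i ∈ range 9 | lab i = none} := by
    rw [himage, card_image_of_injOn (hg.mono fun i hi => by simp at hi; simp; omega)]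
  refine ⟨fun _ => ⟨?_, ?_, (rep_eq_zero_of_isChain hAB (hrep ▸ hchain)).1,
    (rep_eq_zero_of_isChain hAB (hrep ▸ hchain)).2, hcard ▸ hodd⟩, by simp⟩
  · simpa [h0, part] using hpart 0 (by omega)
  · simpa [h8, part] using hpart 8 le_rfl

/-- Typical parts `A' ⊆ A`, `B' ⊆ B`, `S' ⊆ S`, `T' ⊆ T` in which every vertex a path
construction continues from has at least `100` suitable neighbours; `100` exceeds the number of
vertices any such construction has to avoid. -/
structure TypicalParts (G : Finset (Fin n × Fin n)) (A B S T : Finset (Fin n)) where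
  A' : Finset (Fin n)
  B' : Finset (Fin n)
  S' : Finset (Fin n)
  T' : Finset (Fin n)
  A'_subset : A' ⊆ A
  B'_subset : B' ⊆ B
  S'_subset : S' ⊆ S
  T'_subset : T' ⊆ T
  disjoint_AB : Disjoint A B
  disjoint_AS : Disjoint A S
  disjoint_AT : Disjoint A T
  disjoint_BS : Disjoint B S
  disjoint_BT : Disjoint B T
  disjoint_ST : Disjoint S T
  card_S' : 100 ≤ #S'
  card_T' : 100 ≤ #T'
  A'_step : ∀ x ∈ A', ∀ d, 100 ≤ #{y ∈ B' | DAdj G d x y}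
  B'_step : ∀ x ∈ B', ∀ d, 100 ≤ #{y ∈ A' | DAdj G d x y}
  S'_in_A' : ∀ x ∈ S', 100 ≤ #{y ∈ A' | (y, x) ∈ G}
  T'_in_B' : ∀ x ∈ T', 100 ≤ #{y ∈ B' | (y, x) ∈ G}
  S'_in_S' : ∀ x ∈ S', 100 ≤ #{y ∈ S' | (y, x) ∈ G}
  T'_in_T' : ∀ x ∈ T', 100 ≤ #{y ∈ T' | (y, x) ∈ G}
  S'_out_B' : ∀ x ∈ S', 100 ≤ #{y ∈ B' | (x, y) ∈ G}
  T'_out_A' : ∀ x ∈ T', 100 ≤ #{y ∈ A' | (x, y) ∈ G}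
  A_out_B' : ∀ x ∈ A, 100 ≤ #{y ∈ B' | (x, y) ∈ G}
  B_out_A' : ∀ x ∈ B, 100 ≤ #{y ∈ A' | (x, y) ∈ G}
  S_out : ∀ x ∈ S, 100 ≤ #{y ∈ B' | (x, y) ∈ G} ∨ 100 ≤ #{y ∈ S' | (x, y) ∈ G}
  T_out : ∀ x ∈ T, 100 ≤ #{y ∈ A' | (x, y) ∈ G} ∨ 100 ≤ #{y ∈ T' | (x, y) ∈ G}

namespace TypicalParts

variable {G : Finset (Fin n × Fin n)} {A B S T : Finset (Fin n)} (C : TypicalParts G A B S T)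

def swap : TypicalParts G B A T S where
  A' := C.B'
  B' := C.A'
  S' := C.T'
  T' := C.S'
  A'_subset := C.B'_subset
  B'_subset := C.A'_subset
  S'_subset := C.T'_subset
  T'_subset := C.S'_subset
  disjoint_AB := C.disjoint_AB.symm
  disjoint_AS := C.disjoint_BT
  disjoint_AT := C.disjoint_BS
  disjoint_BS := C.disjoint_AT
  disjoint_BT := C.disjoint_AS
  disjoint_ST := C.disjoint_ST.symm
  card_S' := C.card_T'
  card_T' := C.card_S'
  A'_step := C.B'_step
  B'_step := C.A'_step
  S'_in_A' := C.T'_in_B'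
  T'_in_B' := C.S'_in_A'
  S'_in_S' := C.T'_in_T'
  T'_in_T' := C.S'_in_S'
  S'_out_B' := C.T'_out_A'
  T'_out_A' := C.S'_out_B'
  A_out_B' := C.B_out_A'
  B_out_A' := C.A_out_B'
  S_out := C.T_out
  T_out := C.S_out

def typical (c : Bool) : Finset (Fin n) := if c then C.A' else C.B'

@[simp] lemma swap_typical (c : Bool) : C.swap.typical c = C.typical (!c) := by
  cases c <;> rfl

lemma typical_subset_part (c : Bool) : C.typical c ⊆ part A B S T (some c) := by
  cases c
  · exact C.B'_subset
  · exact C.A'_subset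

lemma typical_step {c : Bool} {x : Fin n} (hx : x ∈ C.typical c) (d : Bool) :
    100 ≤ #{y ∈ C.typical (!c) | DAdj G d x y} := by
  cases c
  · exact C.B'_step x hx d
  · exact C.A'_step x hx d

lemma disjoint_AB_ST (C : TypicalParts G A B S T) : Disjoint (A ∪ B) (S ∪ T) := by
  simp only [disjoint_union_left, disjoint_union_right]
  exact ⟨⟨C.disjoint_AS, C.disjoint_BS⟩, C.disjoint_AT, C.disjoint_BT⟩

lemma ne_of_mem_AS_of_mem_BT (C : TypicalParts G A B S T) {x y : Fin n} (hx : x ∈ A ∪ S)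
    (hy : y ∈ B ∪ T) : x ≠ y := by
  rintro rfl
  simp only [mem_union] at hx hy
  rcases hx with hx | hx <;> rcases hy with hy | hy
  exacts [disjoint_left.1 C.disjoint_AB hx hy, disjoint_left.1 C.disjoint_AT hx hy,
    disjoint_left.1 C.disjoint_BS hy hx, disjoint_left.1 C.disjoint_ST hx hy]

end TypicalParts

/-- The vertices of `X` that are typical towards `Y` in the sense of (R6) and (R7). -/
def typicalPair (G : Finset (Fin n × Fin n)) (ρ : ℝ) (X Y : Finset (Fin n)) : Finset (Fin n) :=
  {x ∈ X | (#Y : ℝ) - ρ * n ≤ dPlus G Y x ∧ (#Y : ℝ) - ρ * n ≤ dMinus G Y x}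

/-- The vertices of `X` that are typical in the sense of (R8) and (R9), with out-part `Y` and
in-part `Z`. -/
def typicalTriple (G : Finset (Fin n × Fin n)) (ρ : ℝ) (X Y Z : Finset (Fin n)) :
    Finset (Fin n) :=
  {x ∈ X | (#Y : ℝ) + #X - ρ * n ≤ dPlus G (Y ∪ X) x ∧
    (#Z : ℝ) + #X - ρ * n ≤ dMinus G (Z ∪ X) x}

lemma hundred_le_card_filter {X X' : Finset (Fin n)} {e : ℝ} (hbad : (#(X \ X') : ℝ) ≤ e)
    (p : Fin n → Prop) [DecidablePred p] {L : ℝ} (hL : L ≤ #{y ∈ X | p y}) (h : 100 + e ≤ L) :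
    100 ≤ #{y ∈ X' | p y} := by
  have hsplit : #{y ∈ X | p y} ≤ #{y ∈ X' | p y} + #(X \ X') :=
    (card_le_card fun y hy => by
      rw [mem_filter] at hy
      by_cases hy' : y ∈ X'
      · exact mem_union_left _ (mem_filter.2 ⟨hy', hy.2⟩)
      · exact mem_union_right _ (mem_sdiff.2 ⟨hy.1, hy'⟩)).trans (card_union_le _ _)
  have : (#{y ∈ X | p y} : ℝ) ≤ #{y ∈ X' | p y} + #(X \ X') := by exact_mod_cast hsplit
  exact_mod_cast (by linarith : (100 : ℝ) ≤ #{y ∈ X' | p y})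

lemma hundred_le_card_of_sdiff {X X' : Finset (Fin n)} (hX' : X' ⊆ X) {e : ℝ}
    (hbad : (#(X \ X') : ℝ) ≤ e) (h : 100 + e ≤ #X) : 100 ≤ #X' := by
  have : (#(X \ X') : ℝ) + #X' = #X := by exact_mod_cast card_sdiff_add_card_eq_card hX'
  exact_mod_cast (by linarith : (100 : ℝ) ≤ #X')

section Typical

variable {G : Finset (Fin n × Fin n)} {ρ : ℝ} {X Y Z : Finset (Fin n)} {x : Fin n}

lemma typicalPair_step {Y' : Finset (Fin n)} {e : ℝ} (hx : x ∈ typicalPair G ρ X Y)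
    (hbad : (#(Y \ Y') : ℝ) ≤ e) (h : 100 + e + ρ * n ≤ #Y) (d : Bool) :
    100 ≤ #{y ∈ Y' | DAdj G d x y} := by
  obtain ⟨-, hout, hin⟩ := mem_filter.1 hx
  cases d
  · simpa [DAdj] using hundred_le_card_filter hbad _
      (dMinus_eq_card G Y x ▸ hin) (by linarith)
  · simpa [DAdj] using hundred_le_card_filter hbad _
      (dPlus_eq_card G Y x ▸ hout) (by linarith)

lemma typicalTriple_out (hXY : Disjoint Y X) (hx : x ∈ typicalTriple G ρ X Y Z) :
    (#Y : ℝ) - ρ * n ≤ #{y ∈ Y | (x, y) ∈ G} := by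
  have h := (mem_filter.1 hx).2.1
  have hX : (dPlus G X x : ℝ) ≤ #X := by exact_mod_cast dPlus_le_card G X x
  rw [dPlus_union G x hXY, Nat.cast_add, dPlus_eq_card] at h
  linarith

lemma typicalTriple_in (hZX : Disjoint Z X) (hx : x ∈ typicalTriple G ρ X Y Z) :
    (#Z : ℝ) - ρ * n ≤ #{y ∈ Z | (y, x) ∈ G} := by
  have h := (mem_filter.1 hx).2.2
  have hX : (dMinus G X x : ℝ) ≤ #X := by exact_mod_cast dMinus_le_card G X x
  rw [dMinus_union G x hZX, Nat.cast_add, dMinus_eq_card] at h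
  linarith

lemma typicalTriple_in_self (hZX : Disjoint Z X) (hx : x ∈ typicalTriple G ρ X Y Z) :
    (#X : ℝ) - ρ * n ≤ #{y ∈ X | (y, x) ∈ G} := by
  have h := (mem_filter.1 hx).2.2
  have hZ : (dMinus G Z x : ℝ) ≤ #Z := by exact_mod_cast dMinus_le_card G Z x
  rw [dMinus_union G x hZX, Nat.cast_add, dMinus_eq_card G X] at h
  linarith

lemma hundred_le_card_out_or {X' Y' : Finset (Fin n)} {e c : ℝ} (hXY : Disjoint X Y)
    (hX : (#(X \ X') : ℝ) ≤ e) (hY : (#(Y \ Y') : ℝ) ≤ e) (hc : c ≤ dPlus G (X ∪ Y) x)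
    (h : 200 + 2 * e ≤ c) :
    100 ≤ #{y ∈ X' | (x, y) ∈ G} ∨ 100 ≤ #{y ∈ Y' | (x, y) ∈ G} := by
  rw [dPlus_union G x hXY, Nat.cast_add, dPlus_eq_card, dPlus_eq_card] at hc
  by_cases hcX : c / 2 ≤ #{y ∈ X | (x, y) ∈ G}
  · exact .inl (hundred_le_card_filter hX _ hcX (by linarith))
  · exact .inr (hundred_le_card_filter hY _ (by linarith : c / 2 ≤ _) (by linarith))

end Typical

lemma exists_typicalParts {G : Finset (Fin n × Fin n)} {A B S T : Finset (Fin n)}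
    {ε ε₁ η₁ τ : ℝ} (hpart : Partition4 A B S T) (hR : Rconds G A B S T ε ε₁ η₁ τ) (hε : 0 ≤ ε)
    (hτ : 100 + ε₁ * n + ε ^ ((1 : ℝ) / 3) * n ≤ τ * n) (hη₁ : 200 + 2 * (ε₁ * n) ≤ η₁ * n) :
    Nonempty (TypicalParts G A B S T) := by
  obtain ⟨-, hAB, hAS, hAT, hBS, hBT, hST⟩ := hpart
  obtain ⟨⟨hA, hB, hS, hT⟩, -, ⟨hR3A, hR3B⟩, hR4, hR5, hR6, hR7, hR8, hR9⟩ := hR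
  set ρ := ε ^ ((1 : ℝ) / 3)
  have hρ : 0 ≤ ρ * n := mul_nonneg (Real.rpow_nonneg hε _) n.cast_nonneg
  have hε₁ : 0 ≤ ε₁ * n := (Nat.cast_nonneg _).trans hR6
  have hbadA : (#(A \ typicalPair G ρ A B) : ℝ) ≤ ε₁ * n := by
    rw [typicalPair, ← filter_not]; exact hR6
  have hbadB : (#(B \ typicalPair G ρ B A) : ℝ) ≤ ε₁ * n := by
    rw [typicalPair, ← filter_not]; exact hR7
  have hbadS : (#(S \ typicalTriple G ρ S B A) : ℝ) ≤ ε₁ * n := by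
    rw [typicalTriple, ← filter_not]; exact hR8
  have hbadT : (#(T \ typicalTriple G ρ T A B) : ℝ) ≤ ε₁ * n := by
    rw [typicalTriple, ← filter_not]; exact hR9
  exact ⟨{
    A' := typicalPair G ρ A B
    B' := typicalPair G ρ B A
    S' := typicalTriple G ρ S B A
    T' := typicalTriple G ρ T A B
    A'_subset := filter_subset _ _
    B'_subset := filter_subset _ _
    S'_subset := filter_subset _ _
    T'_subset := filter_subset _ _
    disjoint_AB := hAB
    disjoint_AS := hAS
    disjoint_AT := hAT
    disjoint_BS := hBS
    disjoint_BT := hBT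
    disjoint_ST := hST
    card_S' := hundred_le_card_of_sdiff (filter_subset _ _) hbadS (by linarith)
    card_T' := hundred_le_card_of_sdiff (filter_subset _ _) hbadT (by linarith)
    A'_step := fun _ hx => typicalPair_step hx hbadB (by linarith)
    B'_step := fun _ hx => typicalPair_step hx hbadA (by linarith)
    S'_in_A' := fun _ hx => hundred_le_card_filter hbadA _ (typicalTriple_in hAS hx) (by linarith)
    T'_in_B' := fun _ hx => hundred_le_card_filter hbadB _ (typicalTriple_in hBT hx) (by linarith)
    S'_in_S' := fun _ hx =>
      hundred_le_card_filter hbadS _ (typicalTriple_in_self hAS hx) (by linarith)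
    T'_in_T' := fun _ hx =>
      hundred_le_card_filter hbadT _ (typicalTriple_in_self hBT hx) (by linarith)
    S'_out_B' := fun _ hx => hundred_le_card_filter hbadB _ (typicalTriple_out hBS hx) (by linarith)
    T'_out_A' := fun _ hx => hundred_le_card_filter hbadA _ (typicalTriple_out hAT hx) (by linarith)
    A_out_B' := fun x hx => hundred_le_card_filter hbadB _
      (dPlus_eq_card G B x ▸ (hR3A x hx).1) (by linarith)
    B_out_A' := fun x hx => hundred_le_card_filter hbadA _
      (dPlus_eq_card G A x ▸ (hR3B x hx).1) (by linarith)
    S_out := fun x hx => hundred_le_card_out_or hBS hbadB hbadS (hR4 x hx).1 hη₁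
    T_out := fun x hx => hundred_le_card_out_or hAT hbadA hbadT (hR5 x hx).1 hη₁ }⟩

def IsPartialEmbed (G : Finset (Fin n × Fin n)) (q : ℕ → Bool) (Y : ℕ → Finset (Fin n))
    (P : Finset (Fin n)) (l r : ℕ) (g : ℕ → Fin n) : Prop :=
  Set.InjOn g (Set.Icc l r) ∧ (∀ i ∈ Set.Icc l r, g i ∈ Y i ∧ g i ∉ P) ∧
    ∀ i ∈ Set.Ico l r, DAdj G (q i) (g i) (g (i + 1))

lemma exists_fresh (g : ℕ → Fin n) (l r : ℕ) {P D : Finset (Fin n)}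
    (hD : #P + (r + 1 - l) < #D) : ∃ y ∈ D, y ∉ P ∧ ∀ i ∈ Set.Icc l r, g i ≠ y := by
  have hU : #(P ∪ (Icc l r).image g) < #D :=
    (card_union_le _ _).trans_lt ((Nat.add_le_add_left
      (card_image_le.trans (Nat.card_Icc l r).le) _).trans_lt hD)
  obtain ⟨y, hyD, hyU⟩ := exists_mem_notMem_of_card_lt_card hU
  simp only [mem_union, mem_image, mem_Icc, not_or, not_exists, not_and] at hyU
  exact ⟨y, hyD, hyU.1, fun i hi => hyU.2 i hi⟩

lemma injOn_update_insert {s : Set ℕ} {a : ℕ} {g : ℕ → Fin n} {y : Fin n} (hg : Set.InjOn g s)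
    (ha : a ∉ s) (hy : ∀ i ∈ s, g i ≠ y) : Set.InjOn (Function.update g a y) (insert a s) := by
  have hagree : Set.EqOn (Function.update g a y) g s := fun i hi =>
    Function.update_of_ne (ne_of_mem_of_not_mem hi ha) _ _
  refine (Set.injOn_insert ha).2 ⟨hg.congr hagree.symm, ?_⟩
  rintro ⟨i, hi, h⟩
  rw [hagree hi, Function.update_self] at h
  exact hy i hi h

namespace IsPartialEmbed

variable {G : Finset (Fin n × Fin n)} {q : ℕ → Bool} {Y : ℕ → Finset (Fin n)}
  {P : Finset (Fin n)} {l r : ℕ} {g : ℕ → Fin n}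

lemma extend_right (hg : IsPartialEmbed G q Y P l r g) (hlr : l ≤ r)
    (hY : ∀ x ∈ Y r, #P + (r + 1 - l) < #{y ∈ Y (r + 1) | DAdj G (q r) x y}) :
    ∃ g', IsPartialEmbed G q Y P l (r + 1) g' := by
  obtain ⟨hinj, hmem, hedge⟩ := hg
  obtain ⟨y, hyD, hyP, hyg⟩ := exists_fresh g l r (hY (g r) (hmem r ⟨hlr, le_rfl⟩).1)
  rw [mem_filter] at hyD
  have hr : r + 1 ∉ Set.Icc l r := fun h => by have := h.2; omega
  have hagree : Set.EqOn (Function.update g (r + 1) y) g (Set.Icc l r) := fun i hi =>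
    Function.update_of_ne (ne_of_mem_of_not_mem hi hr) _ _
  refine ⟨Function.update g (r + 1) y, ?_, ?_, ?_⟩
  · rw [← Set.insert_Icc_right_eq_Icc_add_one (by omega)]
    exact injOn_update_insert hinj hr hyg
  · rw [← Set.insert_Icc_right_eq_Icc_add_one (by omega)]
    rintro i (rfl | hi)
    · simpa using ⟨hyD.1, hyP⟩
    · rw [hagree hi]
      exact hmem i hi
  · rw [← Set.insert_Ico_right_eq_Ico_add_one hlr]
    rintro i (rfl | hi)
    · rw [Function.update_self, hagree ⟨hlr, le_rfl⟩]
      exact hyD.2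
    · rw [hagree (Set.Ico_subset_Icc_self hi), hagree ⟨hi.1.trans i.le_succ, hi.2⟩]
      exact hedge i hi

lemma extend_left (hg : IsPartialEmbed G q Y P (l + 1) r g) (hlr : l + 1 ≤ r)
    (hY : ∀ x ∈ Y (l + 1), #P + (r + 1 - l) < #{y ∈ Y l | DAdj G (q l) y x}) :
    ∃ g', IsPartialEmbed G q Y P l r g' := by
  obtain ⟨hinj, hmem, hedge⟩ := hg
  obtain ⟨y, hyD, hyP, hyg⟩ := exists_fresh g (l + 1) r
    ((Nat.add_le_add_left (by omega) _).trans_lt (hY (g (l + 1)) (hmem (l + 1) ⟨le_rfl, hlr⟩).1))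
  rw [mem_filter] at hyD
  have hl : l ∉ Set.Icc (l + 1) r := fun h => by have := h.1; omega
  have hagree : Set.EqOn (Function.update g l y) g (Set.Icc (l + 1) r) := fun i hi =>
    Function.update_of_ne (ne_of_mem_of_not_mem hi hl) _ _
  refine ⟨Function.update g l y, ?_, ?_, ?_⟩
  · rw [← Set.insert_Icc_add_one_left_eq_Icc (by omega)]
    exact injOn_update_insert hinj hl hyg
  · rw [← Set.insert_Icc_add_one_left_eq_Icc (by omega)]
    rintro i (rfl | hi)
    · simpa using ⟨hyD.1, hyP⟩
    · rw [hagree hi]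
      exact hmem i hi
  · rw [← Set.insert_Ico_add_one_left_eq_Ico (by omega)]
    rintro i (rfl | hi)
    · rw [Function.update_self, hagree ⟨le_rfl, hlr⟩]
      exact hyD.2
    · rw [hagree (Set.Ico_subset_Icc_self hi), hagree ⟨hi.1.trans i.le_succ, hi.2⟩]
      exact hedge i hi

lemma extend_right_to (hg : IsPartialEmbed G q Y P l r g) (hlr : l ≤ r) {N : ℕ} (hrN : r ≤ N)
    (hY : ∀ i ∈ Set.Ico r N, ∀ x ∈ Y i, #P + (N - l) < #{y ∈ Y (i + 1) | DAdj G (q i) x y}) :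
    ∃ g', IsPartialEmbed G q Y P l N g' := by
  induction N, hrN using Nat.le_induction with
  | base => exact ⟨g, hg⟩
  | succ N hrN ih =>
    obtain ⟨g', hg'⟩ := ih fun i hi x hx =>
      (Nat.add_le_add_left (by omega) _).trans_lt (hY i ⟨hi.1, Nat.lt_succ_of_lt hi.2⟩ x hx)
    exact hg'.extend_right (hlr.trans hrN) fun x hx =>
      (Nat.add_le_add_left (by omega) _).trans_lt (hY N ⟨hrN, by omega⟩ x hx)

lemma extend_left_to (hg : IsPartialEmbed G q Y P l r g) (hlr : l ≤ r)
    (hY : ∀ i < l, ∀ x ∈ Y (i + 1), #P + (r + 1) < #{y ∈ Y i | DAdj G (q i) y x}) :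
    ∃ g', IsPartialEmbed G q Y P 0 r g' := by
  induction l generalizing g with
  | zero => exact ⟨g, hg⟩
  | succ l ih =>
    obtain ⟨g', hg'⟩ := hg.extend_left hlr fun x hx =>
      (Nat.add_le_add_left (by omega) _).trans_lt (hY l (by omega) x hx)
    exact ih hg' (by omega) fun i hi => hY i (by omega)

end IsPartialEmbed

def abTemplate (cs : ℕ) (core : List (Option Bool)) (i : ℕ) : Option Bool :=
  if i < cs then some (decide (Even i))
  else if i < cs + core.length then core.getD (i - cs) none
  else some (decide (Odd i))

namespace TypicalParts

variable {G : Finset (Fin n × Fin n)} {A B S T : Finset (Fin n)} (C : TypicalParts G A B S T)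

/-- The candidates for position `i` of a path built around the core `h` on `cs, …, ce`; outside
the core they follow `abTemplate`. -/
def slot (cs ce : ℕ) (h : ℕ → Fin n) (i : ℕ) : Finset (Fin n) :=
  if i < cs then C.typical (decide (Even i))
  else if i ≤ ce then {h i} else C.typical (decide (Odd i))

variable {cs ce : ℕ} {h : ℕ → Fin n} {i : ℕ}

lemma slot_of_lt (hi : i < cs) : C.slot cs ce h i = C.typical (decide (Even i)) := by
  simp [slot, hi]

lemma slot_of_mem_Icc (hi : i ∈ Set.Icc cs ce) : C.slot cs ce h i = {h i} := by
  simp [slot, hi.2, Nat.not_lt.2 hi.1]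

lemma slot_of_gt (hcs : cs ≤ ce) (hi : ce < i) : C.slot cs ce h i = C.typical (decide (Odd i)) := by
  simp [slot, show ¬ i < cs by omega, show ¬ i ≤ ce by omega]

lemma card_slot_right (q : ℕ → Bool) {P : Finset (Fin n)} (hP : #P ≤ 9) (hcs : cs ≤ ce)
    (hR : 100 ≤ #{y ∈ C.typical (decide (Odd (ce + 1))) | DAdj G (q ce) (h ce) y}) :
    ∀ i ∈ Set.Ico ce 8, ∀ x ∈ C.slot cs ce h i,
      #P + (8 - cs) < #{y ∈ C.slot cs ce h (i + 1) | DAdj G (q i) x y} := by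
  intro i hi x hx
  rw [C.slot_of_gt hcs (by have := hi.1; omega)]
  rcases eq_or_lt_of_le hi.1 with rfl | hi'
  · rw [C.slot_of_mem_Icc ⟨hcs, le_rfl⟩, mem_singleton] at hx
    subst hx
    omega
  · rw [C.slot_of_gt hcs hi'] at hx
    have := C.typical_step hx (q i)
    rw [show decide (Odd (i + 1)) = !decide (Odd i) by
      simp [Nat.odd_add_one, ← Nat.not_even_iff_odd]]
    omega

lemma card_slot_left (q : ℕ → Bool) {P : Finset (Fin n)} (hP : #P ≤ 9) (hcs : cs ≤ ce)
    (hL : 100 ≤ #{y ∈ C.typical (decide (Even (cs - 1))) | DAdj G (q (cs - 1)) y (h cs)}) :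
    ∀ i < cs, ∀ x ∈ C.slot cs ce h (i + 1),
      #P + (8 + 1) < #{y ∈ C.slot cs ce h i | DAdj G (q i) y x} := by
  intro i hi x hx
  rw [C.slot_of_lt hi]
  rcases eq_or_lt_of_le (show i + 1 ≤ cs from hi) with hi' | hi'
  · rw [hi', C.slot_of_mem_Icc ⟨le_rfl, hcs⟩, mem_singleton] at hx
    subst hx hi'
    rw [Nat.add_sub_cancel] at hL
    omega
  · rw [C.slot_of_lt hi'] at hx
    have := C.typical_step hx (!q i)
    simp only [Nat.even_add_one, decide_not, Bool.not_not, dAdj_not] at this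
    omega

/-- Greedy extension of a core occupying positions `cs, …, ce` to an `AB`-path: typical
vertices always have more than `#P + 9` candidates. -/
lemma exists_AB_of_core (q : ℕ → Bool) {P : Finset (Fin n)} (hP : #P ≤ 9)
    {core : List (Option Bool)} (hce : cs + core.length = ce + 1) (hcsce : cs ≤ ce)
    (hce8 : ce < 8) (hlab : IsABLabelling (abTemplate cs core))
    (hcore : IsPartialEmbed G q (fun i => part A B S T (abTemplate cs core i)) P cs ce h)
    (hL : 100 ≤ #{y ∈ C.typical (decide (Even (cs - 1))) | DAdj G (q (cs - 1)) y (h cs)})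
    (hR : 100 ≤ #{y ∈ C.typical (decide (Odd (ce + 1))) | DAdj G (q ce) (h ce) y}) :
    ∃ g, IsUsefulCopy G A B S T P q true g := by
  have hbase : IsPartialEmbed G q (C.slot cs ce h) P cs ce h :=
    ⟨hcore.1, fun i hi => ⟨by simp [C.slot_of_mem_Icc hi], (hcore.2.1 i hi).2⟩, hcore.2.2⟩
  obtain ⟨g', hg'⟩ := hbase.extend_right_to hcsce hce8.le (C.card_slot_right q hP hcsce hR)
  obtain ⟨g, hg⟩ := hg'.extend_left_to (by omega) (C.card_slot_left q hP hcsce hL)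
  have hinj : Set.InjOn g (Set.Iic 8) := hg.1.mono fun i hi => Set.mem_Icc.2 ⟨Nat.zero_le i, hi⟩
  refine ⟨g, ⟨hinj, fun i hi => hg.2.2 i ⟨Nat.zero_le i, hi⟩⟩,
    fun i hi => (hg.2.1 i ⟨Nat.zero_le i, hi⟩).2,
    useful_of_isABLabelling C.disjoint_AB C.disjoint_AB_ST hlab hinj fun i hi => ?_⟩
  have hgi := (hg.2.1 i ⟨Nat.zero_le i, hi⟩).1
  rcases lt_or_ge i cs with h1 | h1
  · rw [C.slot_of_lt h1] at hgi
    simpa [abTemplate, h1] using C.typical_subset_part _ hgi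
  rcases le_or_gt i ce with h2 | h2
  · rw [C.slot_of_mem_Icc ⟨h1, h2⟩, mem_singleton] at hgi
    exact hgi ▸ (hcore.2.1 i ⟨h1, h2⟩).1
  · rw [C.slot_of_gt hcsce h2] at hgi
    simpa [abTemplate, show ¬ i < cs by omega, show ¬ i < cs + core.length by omega]
      using C.typical_subset_part _ hgi

lemma exists_AB_of_core₁ (q : ℕ → Bool) {P : Finset (Fin n)} (hP : #P ≤ 9) (hcs8 : cs < 8)
    {l : Option Bool} (hlab : IsABLabelling (abTemplate cs [l])) {x : Fin n}
    (hx : x ∈ part A B S T l \ P)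
    (hL : 100 ≤ #{y ∈ C.typical (decide (Even (cs - 1))) | DAdj G (q (cs - 1)) y x})
    (hR : 100 ≤ #{y ∈ C.typical (decide (Odd (cs + 1))) | DAdj G (q cs) x y}) :
    ∃ g, IsUsefulCopy G A B S T P q true g := by
  refine C.exists_AB_of_core q hP (h := fun _ => x) rfl le_rfl hcs8 hlab
    ⟨fun i hi j hj _ => ?_, fun i hi => ?_, fun i hi => by simp at hi⟩ hL hR
  · simp only [Set.mem_Icc] at hi hj
    omega
  · obtain rfl : i = cs := by simp only [Set.mem_Icc] at hi; omega
    simpa [abTemplate] using hx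

lemma exists_AB_of_core₂ (q : ℕ → Bool) {P : Finset (Fin n)} (hP : #P ≤ 9) (hcs8 : cs + 1 < 8)
    {l₀ l₁ : Option Bool} (hlab : IsABLabelling (abTemplate cs [l₀, l₁])) {x₀ x₁ : Fin n}
    (hx₀ : x₀ ∈ part A B S T l₀ \ P) (hx₁ : x₁ ∈ part A B S T l₁ \ P) (hne : x₀ ≠ x₁)
    (hedge : DAdj G (q cs) x₀ x₁)
    (hL : 100 ≤ #{y ∈ C.typical (decide (Even (cs - 1))) | DAdj G (q (cs - 1)) y x₀})
    (hR : 100 ≤ #{y ∈ C.typical (decide (Odd (cs + 2))) | DAdj G (q (cs + 1)) x₁ y}) :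
    ∃ g, IsUsefulCopy G A B S T P q true g := by
  have hpos : ∀ i ∈ Set.Icc cs (cs + 1), ∃ k < 2, i = cs + k := fun i hi =>
    ⟨i - cs, by simp only [Set.mem_Icc] at hi; omega, by simp only [Set.mem_Icc] at hi; omega⟩
  refine C.exists_AB_of_core q hP (h := fun i => if i = cs then x₀ else x₁) rfl
    (Nat.le_succ cs) hcs8 hlab ⟨fun i hi j hj hij => ?_, fun i hi => ?_, fun i hi => ?_⟩
    (by simpa using hL) (by simpa using hR)
  · obtain ⟨k, hk, rfl⟩ := hpos i hi
    obtain ⟨k', hk', rfl⟩ := hpos j hj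
    interval_cases k <;> interval_cases k' <;> simp_all
  · obtain ⟨k, hk, rfl⟩ := hpos i hi
    interval_cases k
    · simpa [abTemplate] using hx₀
    · simpa [abTemplate] using hx₁
  · obtain rfl : i = cs := by simp only [Set.mem_Ico] at hi; omega
    simpa using hedge

lemma exists_AB_of_core₃ (q : ℕ → Bool) {P : Finset (Fin n)} (hP : #P ≤ 9) (hcs8 : cs + 2 < 8)
    {l₀ l₁ l₂ : Option Bool} (hlab : IsABLabelling (abTemplate cs [l₀, l₁, l₂]))
    {x₀ x₁ x₂ : Fin n} (hx₀ : x₀ ∈ part A B S T l₀ \ P) (hx₁ : x₁ ∈ part A B S T l₁ \ P)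
    (hx₂ : x₂ ∈ part A B S T l₂ \ P) (hne : [x₀, x₁, x₂].Nodup)
    (hedge₀ : DAdj G (q cs) x₀ x₁) (hedge₁ : DAdj G (q (cs + 1)) x₁ x₂)
    (hL : 100 ≤ #{y ∈ C.typical (decide (Even (cs - 1))) | DAdj G (q (cs - 1)) y x₀})
    (hR : 100 ≤ #{y ∈ C.typical (decide (Odd (cs + 3))) | DAdj G (q (cs + 2)) x₂ y}) :
    ∃ g, IsUsefulCopy G A B S T P q true g := by
  have hpos : ∀ i ∈ Set.Icc cs (cs + 2), ∃ k < 3, i = cs + k := fun i hi =>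
    ⟨i - cs, by simp only [Set.mem_Icc] at hi; omega, by simp only [Set.mem_Icc] at hi; omega⟩
  simp only [List.nodup_cons, List.mem_cons, List.not_mem_nil, or_false, not_or] at hne
  refine C.exists_AB_of_core q hP
    (h := fun i => if i = cs then x₀ else if i = cs + 1 then x₁ else x₂) rfl
    (Nat.le_add_right cs 2) hcs8 hlab ⟨fun i hi j hj hij => ?_, fun i hi => ?_, fun i hi => ?_⟩
    (by simpa using hL) (by simpa using hR)
  · obtain ⟨k, hk, rfl⟩ := hpos i hi
    obtain ⟨k', hk', rfl⟩ := hpos j hj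
    interval_cases k <;> interval_cases k' <;> simp_all
  · obtain ⟨k, hk, rfl⟩ := hpos i hi
    interval_cases k
    · simpa [abTemplate] using hx₀
    · simpa [abTemplate] using hx₁
    · simpa [abTemplate] using hx₂
  · obtain ⟨k, hk, rfl⟩ : ∃ k < 2, i = cs + k :=
      ⟨i - cs, by simp only [Set.mem_Ico] at hi; omega, by simp only [Set.mem_Ico] at hi; omega⟩
    interval_cases k
    · simpa using hedge₀
    · simpa [add_assoc] using hedge₁

end TypicalParts

def IsAntidirected (q : ℕ → Bool) : Prop := ∀ i < 7, q (i + 1) = !q i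

lemma IsAntidirected.eq_xor {q : ℕ → Bool} (hq : IsAntidirected q) :
    ∀ i ≤ 7, q i = (q 0 ^^ decide (Odd i)) := by
  intro i hi
  induction i with
  | zero => simp
  | succ i ih =>
    rw [hq i (by omega), ih (by omega)]
    simp [Nat.odd_add_one, ← Nat.not_even_iff_odd]

lemma exists_fresh_of_hundred_le {P D : Finset (Fin n)} (hP : #P ≤ 9) (hD : 100 ≤ #D)
    (w v : Fin n) : ∃ z ∈ D, z ∉ P ∧ z ≠ w ∧ z ≠ v := by
  have : #(P ∪ {w, v}) < #D :=
    ((card_union_le _ _).trans (Nat.add_le_add hP card_le_two)).trans_lt (by omega)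
  obtain ⟨z, hz, hzP⟩ := exists_mem_notMem_of_card_lt_card this
  simp only [mem_union, mem_insert, mem_singleton, not_or] at hzP
  exact ⟨z, hz, hzP⟩

namespace TypicalParts

variable {G : Finset (Fin n × Fin n)} {A B S T : Finset (Fin n)} (C : TypicalParts G A B S T)

lemma S'_passThrough {v : Fin n} (hv : v ∈ C.S') (d : Bool) :
    100 ≤ #{y ∈ C.typical d | DAdj G d y v} ∧ 100 ≤ #{y ∈ C.typical (!d) | DAdj G d v y} := by
  cases d
  · simpa [DAdj, typical] using And.intro (C.S'_out_B' v hv) (C.S'_in_A' v hv)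
  · simpa [DAdj, typical] using And.intro (C.S'_in_A' v hv) (C.S'_out_B' v hv)

lemma exists_passThrough {P : Finset (Fin n)} (hP : #P ≤ 9) (c d : Bool) :
    ∃ v ∈ part A B S T none \ P,
      100 ≤ #{y ∈ C.typical c | DAdj G d y v} ∧ 100 ≤ #{y ∈ C.typical (!c) | DAdj G d v y} := by
  by_cases hcd : c = d
  · subst hcd
    obtain ⟨v, hv, hvP⟩ := exists_mem_notMem_of_card_lt_card
      (show #P < #C.S' by have := C.card_S'; omega)
    exact ⟨v, mem_sdiff.2 ⟨mem_union_left _ (C.S'_subset hv), hvP⟩, C.S'_passThrough hv c⟩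
  · obtain rfl : c = !d := by revert hcd; cases c <;> cases d <;> decide
    obtain ⟨v, hv, hvP⟩ := exists_mem_notMem_of_card_lt_card
      (show #P < #C.T' by have := C.card_T'; omega)
    refine ⟨v, mem_sdiff.2 ⟨mem_union_right _ (C.T'_subset hv), hvP⟩, ?_⟩
    simpa using C.swap.S'_passThrough hv d

lemma exists_AB_of_not_antidirected (C : TypicalParts G A B S T) (q : ℕ → Bool)
    {P : Finset (Fin n)} (hP : #P ≤ 9) {k : ℕ} (hk : k < 7) (hq : q (k + 1) = q k) :
    ∃ g, IsUsefulCopy G A B S T P q true g := by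
  obtain ⟨v, hv, hL, hR⟩ := C.exists_passThrough hP (decide (Even k)) (q k)
  refine C.exists_AB_of_core₁ q hP (cs := k + 1) (by omega) ?_ hv (by simpa using hL)
    (by simpa [hq, Nat.odd_add_one, ← Nat.not_even_iff_odd] using hR)
  interval_cases k <;> decide

variable {q : ℕ → Bool} {b : Bool} {P : Finset (Fin n)} {w v : Fin n}

lemma exists_AB_of_anchor_of_mem_B (hq : ∀ i ≤ 7, q i = (b ^^ decide (Odd i))) (hP : #P ≤ 9)
    (hw : w ∈ B \ P) (hv : v ∈ C.S' \ P) (hwv : (w, v) ∈ G) :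
    ∃ g, IsUsefulCopy G A B S T P q true g := by
  obtain ⟨hwB, hwP⟩ := mem_sdiff.1 hw
  obtain ⟨hvS', hvP⟩ := mem_sdiff.1 hv
  have hw' : w ∈ part A B S T (some false) \ P := hw
  have hv' : v ∈ part A B S T none \ P := mem_sdiff.2 ⟨mem_union_left _ (C.S'_subset hvS'), hvP⟩
  have hne : w ≠ v := fun h => disjoint_left.1 C.disjoint_BS hwB (h ▸ C.S'_subset hvS')
  have hwA := C.B_out_A' w hwB
  have hvA := C.S'_in_A' v hvS'
  cases b
  · -- `A' ← w → v ← A'` on the positions `0, …, 3`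
    exact C.exists_AB_of_core₂ q hP (cs := 1) (by norm_num) (by decide) hw' hv' hne
      (by simpa [DAdj, hq, Nat.odd_iff] using hwv)
      (by simpa [DAdj, hq, typical, Nat.odd_iff, Nat.even_iff] using hwA)
      (by simpa [DAdj, hq, typical, Nat.odd_iff, Nat.even_iff] using hvA)
  · -- `A' → v ← w → A'` on the positions `0, …, 3`
    exact C.exists_AB_of_core₂ q hP (cs := 1) (by norm_num) (by decide) hv' hw' hne.symm
      (by simpa [DAdj, hq, Nat.odd_iff] using hwv)
      (by simpa [DAdj, hq, typical, Nat.odd_iff, Nat.even_iff] using hvA)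
      (by simpa [DAdj, hq, typical, Nat.odd_iff, Nat.even_iff] using hwA)

lemma exists_AB_of_anchor_of_out_A' (hq : ∀ i ≤ 7, q i = (b ^^ decide (Odd i))) (hP : #P ≤ 9)
    (hw : w ∈ T \ P) (hv : v ∈ C.S' \ P) (hwv : (w, v) ∈ G)
    (hwA : 100 ≤ #{y ∈ C.A' | (w, y) ∈ G}) : ∃ g, IsUsefulCopy G A B S T P q true g := by
  obtain ⟨hwT, hwP⟩ := mem_sdiff.1 hw
  obtain ⟨hvS', hvP⟩ := mem_sdiff.1 hv
  obtain ⟨z, hz, hzP, hzw, hzv⟩ := exists_fresh_of_hundred_le hP (C.S'_in_S' v hvS') w v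
  rw [mem_filter] at hz
  have hw' : w ∈ part A B S T none \ P := mem_sdiff.2 ⟨mem_union_right _ hwT, hwP⟩
  have hv' : v ∈ part A B S T none \ P := mem_sdiff.2 ⟨mem_union_left _ (C.S'_subset hvS'), hvP⟩
  have hz' : z ∈ part A B S T none \ P := mem_sdiff.2 ⟨mem_union_left _ (C.S'_subset hz.1), hzP⟩
  have hwv' : w ≠ v := fun h => disjoint_left.1 C.disjoint_ST (C.S'_subset hvS') (h ▸ hwT)
  have hzB := C.S'_out_B' z hz.1
  cases b
  · -- `A' ← w → v ← z → B'` on the positions `0, …, 4`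
    exact C.exists_AB_of_core₃ q hP (cs := 1) (by norm_num) (by decide) hw' hv' hz'
      (by simp [hwv', hzw.symm, hzv.symm]) (by simpa [DAdj, hq, Nat.odd_iff] using hwv)
      (by simpa [DAdj, hq, Nat.odd_iff] using hz.2)
      (by simpa [DAdj, hq, typical, Nat.odd_iff] using hwA)
      (by simpa [DAdj, hq, typical, Nat.odd_iff] using hzB)
  · -- `B' ← z → v ← w → A'` on the positions `1, …, 5`
    exact C.exists_AB_of_core₃ q hP (cs := 2) (by norm_num) (by decide) hz' hv' hw'
      (by simp [hwv'.symm, hzw, hzv]) (by simpa [DAdj, hq, Nat.odd_iff] using hz.2)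
      (by simpa [DAdj, hq, Nat.odd_iff] using hwv)
      (by simpa [DAdj, hq, typical, Nat.odd_iff, Nat.even_iff] using hzB)
      (by simpa [DAdj, hq, typical, Nat.odd_iff] using hwA)

lemma exists_AB_of_anchor_of_out_T' (hq : ∀ i ≤ 7, q i = (b ^^ decide (Odd i))) (hP : #P ≤ 9)
    (hw : w ∈ T \ P) (hv : v ∈ C.S' \ P) (hwv : (w, v) ∈ G)
    (hwT' : 100 ≤ #{y ∈ C.T' | (w, y) ∈ G}) : ∃ g, IsUsefulCopy G A B S T P q true g := by
  obtain ⟨hwT, hwP⟩ := mem_sdiff.1 hw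
  obtain ⟨hvS', hvP⟩ := mem_sdiff.1 hv
  obtain ⟨t, ht, htP, htw, htv⟩ := exists_fresh_of_hundred_le hP hwT' w v
  rw [mem_filter] at ht
  have hw' : w ∈ part A B S T none \ P := mem_sdiff.2 ⟨mem_union_right _ hwT, hwP⟩
  have hv' : v ∈ part A B S T none \ P := mem_sdiff.2 ⟨mem_union_left _ (C.S'_subset hvS'), hvP⟩
  have ht' : t ∈ part A B S T none \ P := mem_sdiff.2 ⟨mem_union_right _ (C.T'_subset ht.1), htP⟩
  have hwv' : w ≠ v := fun h => disjoint_left.1 C.disjoint_ST (C.S'_subset hvS') (h ▸ hwT)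
  have htB := C.T'_in_B' t ht.1
  have hvA := C.S'_in_A' v hvS'
  cases b
  · -- `B' → t ← w → v ← A'` on the positions `1, …, 5`
    exact C.exists_AB_of_core₃ q hP (cs := 2) (by norm_num) (by decide) ht' hw' hv'
      (by simp [hwv', htw, htv]) (by simpa [DAdj, hq, Nat.odd_iff] using ht.2)
      (by simpa [DAdj, hq, Nat.odd_iff] using hwv)
      (by simpa [DAdj, hq, typical, Nat.odd_iff, Nat.even_iff] using htB)
      (by simpa [DAdj, hq, typical, Nat.odd_iff] using hvA)
  · -- `A' → v ← w → t ← B'` on the positions `0, …, 4`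
    exact C.exists_AB_of_core₃ q hP (cs := 1) (by norm_num) (by decide) hv' hw' ht'
      (by simp [hwv'.symm, htw.symm, htv.symm]) (by simpa [DAdj, hq, Nat.odd_iff] using hwv)
      (by simpa [DAdj, hq, Nat.odd_iff] using ht.2)
      (by simpa [DAdj, hq, typical, Nat.odd_iff] using hvA)
      (by simpa [DAdj, hq, typical, Nat.odd_iff] using htB)

lemma exists_AB_of_anchorS (q : ℕ → Bool) (hP : #P ≤ 9) (hw : w ∈ (B ∪ T) \ P)
    (hv : v ∈ C.S' \ P) (hwv : (w, v) ∈ G) : ∃ g, IsUsefulCopy G A B S T P q true g := by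
  by_cases hq : IsAntidirected q
  · obtain ⟨hwBT, hwP⟩ := mem_sdiff.1 hw
    rcases mem_union.1 hwBT with hwB | hwT
    · exact C.exists_AB_of_anchor_of_mem_B hq.eq_xor hP (mem_sdiff.2 ⟨hwB, hwP⟩) hv hwv
    · rcases C.T_out w hwT with hwA | hwT'
      · exact C.exists_AB_of_anchor_of_out_A' hq.eq_xor hP (mem_sdiff.2 ⟨hwT, hwP⟩) hv hwv hwA
      · exact C.exists_AB_of_anchor_of_out_T' hq.eq_xor hP (mem_sdiff.2 ⟨hwT, hwP⟩) hv hwv hwT'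
  · simp only [IsAntidirected, not_forall, Bool.eq_not, not_not] at hq
    obtain ⟨k, hk, hqk⟩ := hq
    exact C.exists_AB_of_not_antidirected q hP hk hqk

/-- An edge entering `S'` from `B ∪ T`, or entering `T'` from `A ∪ S`: the core of a useful copy
of an antidirected path. -/
def IsAnchor (w v : Fin n) : Prop :=
  (w ∈ B ∪ T ∧ v ∈ C.S' ∨ w ∈ A ∪ S ∧ v ∈ C.T') ∧ (w, v) ∈ G

lemma exists_isUsefulCopy (q : ℕ → Bool) (b : Bool) (hP : #P ≤ 9) (hwv : C.IsAnchor w v)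
    (hwP : w ∉ P) (hvP : v ∉ P) : ∃ g, IsUsefulCopy G A B S T P q b g := by
  obtain ⟨⟨hw, hv⟩ | ⟨hw, hv⟩, hwv⟩ := hwv
  · exact exists_isUsefulCopy_of_forall_AB (fun q => C.exists_AB_of_anchorS q hP
      (mem_sdiff.2 ⟨hw, hwP⟩) (mem_sdiff.2 ⟨hv, hvP⟩) hwv) q b
  · obtain ⟨g, hg, hgP, hgu⟩ := exists_isUsefulCopy_of_forall_AB (fun q =>
      C.swap.exists_AB_of_anchorS q hP (mem_sdiff.2 ⟨hw, hwP⟩) (mem_sdiff.2 ⟨hv, hvP⟩) hwv) q (!b)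
    exact ⟨g, hg, hgP, by simpa using useful_swap_iff.1 hgu⟩

/-- If `w₁` is the only in-neighbour in `B ∪ T` of two vertices of `S'`, the counting
hypothesis `hST` gives every vertex of `T'` an in-neighbour in `A ∪ S`. -/
lemma exists_disjoint_anchors (hS : ∀ v ∈ S, 1 ≤ #{w ∈ B ∪ T | (w, v) ∈ G})
    (hST : ∀ v ∈ S, ∀ u ∈ T, 2 ≤ #{w ∈ B ∪ T | (w, v) ∈ G} + #{x ∈ A ∪ S | (x, u) ∈ G}) :
    ∃ w₁ v₁ w₂ v₂, C.IsAnchor w₁ v₁ ∧ C.IsAnchor w₂ v₂ ∧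
      w₁ ∉ ({w₂, v₂} : Finset (Fin n)) ∧ v₁ ∉ ({w₂, v₂} : Finset (Fin n)) := by
  have hS' : ∀ {v}, v ∈ C.S' → v ∈ A ∪ S := fun hv => mem_union_right _ (C.S'_subset hv)
  have hT' : ∀ {u}, u ∈ C.T' → u ∈ B ∪ T := fun hu => mem_union_right _ (C.T'_subset hu)
  obtain ⟨v₁, hv₁⟩ : C.S'.Nonempty := card_pos.1 (by have := C.card_S'; omega)
  obtain ⟨w₁, hw₁⟩ := card_pos.1 (hS v₁ (C.S'_subset hv₁))
  rw [mem_filter] at hw₁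
  obtain ⟨v₂, hv₂, hv₂₁⟩ := exists_mem_notMem_of_card_lt_card
    (show #{v₁} < #C.S' by have := C.card_S'; simp; omega)
  replace hv₂₁ : v₂ ≠ v₁ := by simpa using hv₂₁
  by_cases h : ∃ w₂ ∈ B ∪ T, (w₂, v₂) ∈ G ∧ w₂ ≠ w₁
  · obtain ⟨w₂, hw₂, hw₂v₂, hw₂₁⟩ := h
    refine ⟨w₁, v₁, w₂, v₂, ⟨.inl ⟨hw₁.1, hv₁⟩, hw₁.2⟩, ⟨.inl ⟨hw₂, hv₂⟩, hw₂v₂⟩, ?_, ?_⟩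
    · simp [hw₂₁.symm, (C.ne_of_mem_AS_of_mem_BT (hS' hv₂) hw₁.1).symm]
    · simp [C.ne_of_mem_AS_of_mem_BT (hS' hv₁) hw₂, hv₂₁.symm]
  push Not at h
  have hle : #{w ∈ B ∪ T | (w, v₂) ∈ G} ≤ 1 :=
    card_le_one.2 fun a ha b hb => by
      rw [mem_filter] at ha hb
      rw [h a ha.1 ha.2, h b hb.1 hb.2]
  obtain ⟨w, hw⟩ := card_pos.1 (hS v₂ (C.S'_subset hv₂))
  rw [mem_filter] at hw
  have hw₁v₂ : (w₁, v₂) ∈ G := h w hw.1 hw.2 ▸ hw.2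
  obtain ⟨u, hu, huw₁⟩ := exists_mem_notMem_of_card_lt_card
    (show #{w₁} < #C.T' by have := C.card_T'; simp; omega)
  replace huw₁ : u ≠ w₁ := by simpa using huw₁
  obtain ⟨x, hx⟩ := card_pos.1 (show 0 < #{x ∈ A ∪ S | (x, u) ∈ G} by
    have := hST v₂ (C.S'_subset hv₂) u (C.T'_subset hu); omega)
  rw [mem_filter] at hx
  obtain ⟨v, hv, hw₁v, hxv⟩ : ∃ v ∈ C.S', (w₁, v) ∈ G ∧ x ≠ v := by
    by_cases hxv₂ : x = v₂
    · exact ⟨v₁, hv₁, hw₁.2, hxv₂ ▸ hv₂₁⟩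
    · exact ⟨v₂, hv₂, hw₁v₂, hxv₂⟩
  refine ⟨x, u, w₁, v, ⟨.inr ⟨hx.1, hu⟩, hx.2⟩, ⟨.inl ⟨hw₁.1, hv⟩, hw₁v⟩, ?_, ?_⟩
  · simp [C.ne_of_mem_AS_of_mem_BT hx.1 hw₁.1, hxv]
  · simp [huw₁, (C.ne_of_mem_AS_of_mem_BT (hS' hv) (hT' hu)).symm]

lemma exists_disjoint_usefulCopies (C : TypicalParts G A B S T)
    (hS : ∀ v ∈ S, 1 ≤ #{w ∈ B ∪ T | (w, v) ∈ G})
    (hST : ∀ v ∈ S, ∀ u ∈ T, 2 ≤ #{w ∈ B ∪ T | (w, v) ∈ G} + #{x ∈ A ∪ S | (x, u) ∈ G})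
    (q₁ q₂ : ℕ → Bool) (b₁ b₂ : Bool) :
    ∃ g₁ g₂, IsUsefulCopy G A B S T ∅ q₁ b₁ g₁ ∧
      IsUsefulCopy G A B S T ((range 9).image g₁) q₂ b₂ g₂ := by
  obtain ⟨w₁, v₁, w₂, v₂, h₁, h₂, hw₁, hv₁⟩ := C.exists_disjoint_anchors hS hST
  obtain ⟨g₁, hg₁, hg₁P, hu₁⟩ :=
    C.exists_isUsefulCopy q₁ b₁ (card_le_two.trans (by norm_num)) h₁ hw₁ hv₁
  have hfree : ∀ x ∈ ({w₂, v₂} : Finset (Fin n)), x ∉ (range 9).image g₁ := by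
    intro x hx hx'
    obtain ⟨i, hi, rfl⟩ := mem_image.1 hx'
    exact hg₁P i (by simp at hi; omega) hx
  obtain ⟨g₂, hg₂⟩ := C.exists_isUsefulCopy q₂ b₂ (card_image_le.trans (by simp)) h₂
    (hfree w₂ (by simp)) (hfree v₂ (by simp))
  exact ⟨g₁, g₂, ⟨hg₁, fun i _ => notMem_empty _, hu₁⟩, hg₂⟩

end TypicalParts

end ABST

/-- given an `ABST`-extremal partition and any two oriented paths `q₁, q₂`
of length `8`, `G` contains disjoint useful copies of them, where for each one may
prescribe (via `b₁, b₂`) whether the copy is an `AB`-path or a `BA`-path. -/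
theorem stmt_18 :
    ∃ τmax : ℝ, 0 < τmax ∧ ∀ τ : ℝ, 0 < τ → τ ≤ τmax →
    ∃ η₁max : ℝ, 0 < η₁max ∧ ∀ η₁ : ℝ, 0 < η₁ → η₁ ≤ η₁max →
    ∃ ε₁max : ℝ, 0 < ε₁max ∧ ∀ ε₁ : ℝ, 0 < ε₁ → ε₁ ≤ ε₁max →
    ∃ εmax : ℝ, 0 < εmax ∧ ∀ ε : ℝ, 0 < ε → ε ≤ εmax →
    ∃ n₀ : ℕ, ∀ n : ℕ, n₀ ≤ n →
    ∀ G : Finset (Fin n × Fin n), (∀ e ∈ G, e.1 ≠ e.2) →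
      MinSemi G ((n : ℝ) / 2) →
      ∀ A B S T : Finset (Fin n), Partition4 A B S T → R0 A B S T →
        Rconds G A B S T ε ε₁ η₁ τ →
      ∀ q₁ q₂ : ℕ → Bool, ∀ b₁ b₂ : Bool,
      ∃ g₁ g₂ : ℕ → Fin n,
        PathEmbed G q₁ 8 g₁ ∧ PathEmbed G q₂ 8 g₂ ∧
        (∀ i ≤ 8, ∀ j ≤ 8, g₁ i ≠ g₂ j) ∧
        (b₁ = true → UsefulAB A B S T 8 g₁) ∧ (b₁ = false → UsefulBA A B S T 8 g₁) ∧
        (b₂ = true → UsefulAB A B S T 8 g₂) ∧ (b₂ = false → UsefulBA A B S T 8 g₂) := by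
  refine ⟨1, one_pos, fun τ hτ _ => ⟨τ, hτ, fun η₁ hη₁ hη₁τ => ⟨η₁ / 4, by positivity,
    fun ε₁ _ hε₁ => ⟨(η₁ / 4) ^ 3, by positivity, fun ε hε hεη₁ => ⟨⌈400 / η₁⌉₊,
    fun n hn G hloop hmin A B S T hpart hR0 hR q₁ q₂ b₁ b₂ => ?_⟩⟩⟩⟩⟩
  have hρ := rpow_one_third_le hε.le (by positivity) hεη₁
  have hn' : 400 ≤ η₁ * n := by
    rw [mul_comm, ← div_le_iff₀ hη₁]
    exact Nat.ceil_le.1 hn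
  have hn0 : (0 : ℝ) ≤ n := n.cast_nonneg
  obtain ⟨C⟩ := ABST.exists_typicalParts hpart hR hε.le (by nlinarith) (by nlinarith)
  obtain ⟨g₁, g₂, ⟨hg₁, -, hu₁⟩, hg₂, hg₂P, hu₂⟩ := C.exists_disjoint_usefulCopies
    (fun v hv => one_le_card_inNbrs_BT hloop hmin hpart hR0 hv)
    (fun v hv u hu => two_le_card_inNbrs_add hloop hmin hpart hv hu) q₁ q₂ b₁ b₂
  refine ⟨g₁, g₂, hg₁, hg₂, fun i hi j hj h => hg₂P j hj ?_, hu₁.1, hu₁.2, hu₂.1, hu₂.2⟩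
  exact h ▸ mem_image_of_mem g₁ (mem_range.2 (by omega))
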